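/- In the braid group B_n (n ≥ 3), with λ_{n,r} = δ_n^r δ_{n−1}^{−r} (r ≥ 1), the element λ_{n,0}^{−1} λ_{n,1} := a_{n−1,n}^{−1} δ_n δ_{n−1}^{−1} equals δ_n a_{n−2,n−1}^{−1} δ_{n−1}^{−1}, and hence is σ_{n−1}-positive. -/

import Mathlib

/-- Relations of the braid group `B_n` on generators `σ_1, …, σ_{n-1}`
(indexed by natural numbers; the generators of index `0` or `≥ n` are killed,
so that the presented group is exactly `B_n`). -/
def braidRels (n : ℕ) : Set (FreeGroup ℕ) :=
  {r | (∃ i j : ℕ, 1 ≤ i ∧ i + 2 ≤ j ∧ j ≤ n - 1 ∧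
          r = FreeGroup.of i * FreeGroup.of j * (FreeGroup.of i)⁻¹ * (FreeGroup.of j)⁻¹) ∨
       (∃ i : ℕ, 1 ≤ i ∧ i + 1 ≤ n - 1 ∧
          r = FreeGroup.of i * FreeGroup.of (i + 1) * FreeGroup.of i *
              (FreeGroup.of (i + 1) * FreeGroup.of i * FreeGroup.of (i + 1))⁻¹) ∨
       (∃ i : ℕ, (i = 0 ∨ n ≤ i) ∧ r = FreeGroup.of i)}

/-- The braid group `B_n`. -/
def BraidGroup (n : ℕ) : Type := PresentedGroup (braidRels n)

instance (n : ℕ) : Group (BraidGroup n) := by unfold BraidGroup; infer_instance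

/-- The Artin generator `σ_i` of `B_n` (nontrivial for `1 ≤ i ≤ n-1`). -/
def σ (n i : ℕ) : BraidGroup n := PresentedGroup.of i

/-- `δ_{p,q} = σ_p σ_{p+1} ⋯ σ_{q-1}` (equal to `1` when `q ≤ p`). -/
def δδ (n p q : ℕ) : BraidGroup n :=
  ((List.range (q - p)).map (fun k => σ n (p + k))).prod

/-- The Birman–Ko–Lee generator
`a_{p,q} = σ_p ⋯ σ_{q-2} σ_{q-1} σ_{q-2}⁻¹ ⋯ σ_p⁻¹ = δ_{p,q-1} σ_{q-1} δ_{p,q-1}⁻¹`. -/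
def a (n p q : ℕ) : BraidGroup n :=
  δδ n p (q - 1) * σ n (q - 1) * (δδ n p (q - 1))⁻¹

/-- A braid of `B_n` is `σ_i`-positive if it is represented by a word in the
letters `σ_j^{±1}` containing at least one `σ_i`, no `σ_i⁻¹`,
and no letter `σ_j^{±1}` with `j > i`. -/
def SigmaPositive (n i : ℕ) (β : BraidGroup n) : Prop :=
  ∃ w : List (ℕ × Bool),
    ((w.map (fun l => if l.2 then σ n l.1 else (σ n l.1)⁻¹)).prod = β) ∧
    (i, true) ∈ w ∧ (i, false) ∉ w ∧ ∀ l ∈ w, l.1 ≤ i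


/-!
Conjugation by `δ_{p,i+2} = σ_p ⋯ σ_{i+1}` sends `σ_i` to `σ_{i+1}`: the braid relation
`σ_i σ_{i+1} σ_i = σ_{i+1} σ_i σ_{i+1}` moves `σ_i` past the last two letters, and `σ_{i+1}`
commutes with `σ_p ⋯ σ_{i-1}`. As `a_{p,p+1} = σ_p`, this gives
`σ_{n-1}⁻¹ δ_n = δ_n σ_{n-2}⁻¹`, which is the identity. Writing `δ_n = δ_{n-1} σ_{n-1}`, the
right-hand side is `σ_{n-1}` multiplied on both sides by braids in `σ_1, …, σ_{n-2}`, hence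
`σ_{n-1}`-positive.
-/

section

variable {n : ℕ}

lemma σ_eq_one {i : ℕ} (hi : i = 0 ∨ n ≤ i) : σ n i = 1 :=
  (QuotientGroup.eq_one_iff _).2 <|
    Subgroup.subset_normalClosure (Or.inr (Or.inr ⟨i, hi, rfl⟩))

lemma commute_σ_σ {i j : ℕ} (hij : i + 2 ≤ j) : Commute (σ n i) (σ n j) := by
  rcases Nat.eq_zero_or_pos i with rfl | hi
  · rw [σ_eq_one (Or.inl rfl)]; exact Commute.one_left _
  by_cases hj : n ≤ j
  · rw [σ_eq_one (Or.inr hj)]; exact Commute.one_right _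
  have h : (PresentedGroup.mk (braidRels n)
      (FreeGroup.of i * FreeGroup.of j * (FreeGroup.of i)⁻¹ * (FreeGroup.of j)⁻¹) :
        BraidGroup n) = 1 :=
    (QuotientGroup.eq_one_iff _).2 <|
      Subgroup.subset_normalClosure (Or.inl ⟨i, j, hi, hij, by omega, rfl⟩)
  simp only [map_mul, map_inv] at h
  exact mul_inv_eq_iff_eq_mul.mp (mul_inv_eq_one.mp h)

lemma σ_braid {i : ℕ} (hi : 1 ≤ i) (hin : i + 2 ≤ n) :
    σ n i * σ n (i + 1) * σ n i = σ n (i + 1) * σ n i * σ n (i + 1) := by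
  have h : (PresentedGroup.mk (braidRels n)
      (FreeGroup.of i * FreeGroup.of (i + 1) * FreeGroup.of i *
        (FreeGroup.of (i + 1) * FreeGroup.of i * FreeGroup.of (i + 1))⁻¹) : BraidGroup n) = 1 :=
    (QuotientGroup.eq_one_iff _).2 <|
      Subgroup.subset_normalClosure (Or.inr (Or.inl ⟨i, hi, by omega, rfl⟩))
  simp only [map_mul, map_inv] at h
  exact mul_inv_eq_one.mp h

lemma δδ_self (p : ℕ) : δδ n p p = 1 := by
  simp [δδ]

lemma δδ_succ {p q : ℕ} (h : p ≤ q) : δδ n p (q + 1) = δδ n p q * σ n q := by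
  rw [δδ, δδ, show q + 1 - p = q - p + 1 by omega, List.range_succ, List.map_append,
    List.prod_append, List.map_singleton, List.prod_singleton, Nat.add_sub_cancel' h]

lemma a_self_succ (p : ℕ) : a n p (p + 1) = σ n p := by
  simp [a, δδ_self]

lemma commute_σ_δδ {j p q : ℕ} (hqj : q + 1 ≤ j) : Commute (σ n j) (δδ n p q) := by
  induction q with
  | zero => simp [δδ]
  | succ q ih =>
    rcases le_or_gt p q with hpq | hqp
    · rw [δδ_succ hpq]
      exact (ih (by omega)).mul_right (commute_σ_σ (by omega)).symm
    · simp [δδ, Nat.sub_eq_zero_of_le hqp]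

lemma δδ_mul_σ {p i : ℕ} (hi : 1 ≤ i) (hpi : p ≤ i) (hin : i + 2 ≤ n) :
    δδ n p (i + 2) * σ n i = σ n (i + 1) * δδ n p (i + 2) := by
  have hδ : δδ n p (i + 2) = δδ n p i * σ n i * σ n (i + 1) := by
    rw [δδ_succ (by omega), δδ_succ hpi]
  have hcomm : Commute (σ n (i + 1)) (δδ n p i) := commute_σ_δδ le_rfl
  calc δδ n p (i + 2) * σ n i = δδ n p i * (σ n i * σ n (i + 1) * σ n i) := by rw [hδ]; group
    _ = δδ n p i * (σ n (i + 1) * σ n i * σ n (i + 1)) := by rw [σ_braid hi hin]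
    _ = σ n (i + 1) * δδ n p i * (σ n i * σ n (i + 1)) := by rw [hcomm.eq]; group
    _ = σ n (i + 1) * δδ n p (i + 2) := by rw [hδ]; group

def letter (n : ℕ) (l : ℕ × Bool) : BraidGroup n :=
  if l.2 then σ n l.1 else (σ n l.1)⁻¹

lemma letter_flip (l : ℕ × Bool) : letter n (l.1, !l.2) = (letter n l)⁻¹ := by
  cases l with
  | mk j b => cases b <;> simp [letter]

lemma prod_map_letter_reverse_flip (w : List (ℕ × Bool)) :
    (((w.map fun l => (l.1, !l.2)).reverse).map (letter n)).prod =
      ((w.map (letter n)).prod)⁻¹ := by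
  induction w with
  | nil => simp
  | cons l w ih =>
    simp only [List.map_cons, List.reverse_cons, List.map_append, List.prod_append, ih,
      List.map_nil, List.prod_nil, mul_one, letter_flip, List.prod_cons, mul_inv_rev]

def subgroupBelow (n i : ℕ) : Subgroup (BraidGroup n) :=
  Subgroup.closure (σ n '' Set.Iio i)

lemma σ_mem_subgroupBelow {i j : ℕ} (hj : j < i) : σ n j ∈ subgroupBelow n i :=
  Subgroup.subset_closure ⟨j, hj, rfl⟩

lemma δδ_mem_subgroupBelow {i p q : ℕ} (hq : q ≤ i) : δδ n p q ∈ subgroupBelow n i := by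
  refine list_prod_mem fun x hx => ?_
  obtain ⟨k, hk, rfl⟩ := List.mem_map.mp hx
  exact σ_mem_subgroupBelow (by rw [List.mem_range] at hk; omega)

lemma exists_word_of_mem_subgroupBelow {i : ℕ} {γ : BraidGroup n}
    (hγ : γ ∈ subgroupBelow n i) :
    ∃ w : List (ℕ × Bool), (w.map (letter n)).prod = γ ∧ ∀ l ∈ w, l.1 < i := by
  induction hγ using Subgroup.closure_induction with
  | mem x hx =>
    obtain ⟨j, hj, rfl⟩ := hx
    exact ⟨[(j, true)], by simp [letter], by simpa using hj⟩
  | one => exact ⟨[], rfl, by simp⟩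
  | mul x y _ _ hx hy =>
    obtain ⟨u, rfl, hu⟩ := hx
    obtain ⟨v, rfl, hv⟩ := hy
    refine ⟨u ++ v, by simp, fun l hl => ?_⟩
    rcases List.mem_append.mp hl with hl | hl
    exacts [hu l hl, hv l hl]
  | inv x _ hx =>
    obtain ⟨u, rfl, hu⟩ := hx
    refine ⟨(u.map fun l => (l.1, !l.2)).reverse, prod_map_letter_reverse_flip u, ?_⟩
    simp only [List.mem_reverse, List.mem_map]
    rintro _ ⟨l, hl, rfl⟩
    exact hu l hl

lemma sigmaPositive_σ (i : ℕ) : SigmaPositive n i (σ n i) :=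
  ⟨[(i, true)], by simp, by simp, by simp, by simp⟩

lemma SigmaPositive.mul_left {i : ℕ} {β γ : BraidGroup n} (hβ : SigmaPositive n i β)
    (hγ : γ ∈ subgroupBelow n i) : SigmaPositive n i (γ * β) := by
  obtain ⟨w, rfl, hpos, hneg, hle⟩ := hβ
  obtain ⟨u, rfl, hu⟩ := exists_word_of_mem_subgroupBelow hγ
  refine ⟨u ++ w, by rw [List.map_append, List.prod_append]; rfl, List.mem_append_right _ hpos,
    fun h => ?_, fun l hl => ?_⟩
  · rcases List.mem_append.mp h with h | h
    exacts [(hu _ h).false, hneg h]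
  · rcases List.mem_append.mp hl with hl | hl
    exacts [(hu l hl).le, hle l hl]

lemma SigmaPositive.mul_right {i : ℕ} {β γ : BraidGroup n} (hβ : SigmaPositive n i β)
    (hγ : γ ∈ subgroupBelow n i) : SigmaPositive n i (β * γ) := by
  obtain ⟨w, rfl, hpos, hneg, hle⟩ := hβ
  obtain ⟨u, rfl, hu⟩ := exists_word_of_mem_subgroupBelow hγ
  refine ⟨w ++ u, by rw [List.map_append, List.prod_append]; rfl, List.mem_append_left _ hpos,
    fun h => ?_, fun l hl => ?_⟩
  · rcases List.mem_append.mp h with h | h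
    exacts [hneg h, (hu _ h).false]
  · rcases List.mem_append.mp hl with hl | hl
    exacts [hle l hl, (hu l hl).le]

end

theorem stmt19 (n : ℕ) (hn : 3 ≤ n) :
    (a n (n - 1) n)⁻¹ * (δδ n 1 n * (δδ n 1 (n - 1))⁻¹) =
      δδ n 1 n * (a n (n - 2) (n - 1))⁻¹ * (δδ n 1 (n - 1))⁻¹ ∧
    SigmaPositive n (n - 1)
      ((a n (n - 1) n)⁻¹ * (δδ n 1 n * (δδ n 1 (n - 1))⁻¹)) := by
  obtain ⟨i, rfl⟩ : ∃ i, n = i + 2 := ⟨n - 2, by omega⟩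
  simp only [show i + 2 - 1 = i + 1 by omega, show i + 2 - 2 = i by omega, a_self_succ]
  have hshift : (σ (i + 2) (i + 1))⁻¹ * δδ (i + 2) 1 (i + 2) =
      δδ (i + 2) 1 (i + 2) * (σ (i + 2) i)⁻¹ := by
    rw [inv_mul_eq_iff_eq_mul, ← mul_assoc, ← δδ_mul_σ (by omega) (by omega) le_rfl]
    group
  have hid : (σ (i + 2) (i + 1))⁻¹ * (δδ (i + 2) 1 (i + 2) * (δδ (i + 2) 1 (i + 1))⁻¹) =
      δδ (i + 2) 1 (i + 2) * (σ (i + 2) i)⁻¹ * (δδ (i + 2) 1 (i + 1))⁻¹ := by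
    rw [← mul_assoc, hshift]
  refine ⟨hid, ?_⟩
  rw [hid, δδ_succ (p := 1) (q := i + 1) (by omega), mul_assoc (δδ _ 1 (i + 1) * _)]
  exact ((sigmaPositive_σ _).mul_left (δδ_mem_subgroupBelow le_rfl)).mul_right <|
    mul_mem (inv_mem (σ_mem_subgroupBelow i.lt_succ_self)) (inv_mem (δδ_mem_subgroupBelow le_rfl))
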